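/- Let u : ℝ^n × [0,T] → ℝ be bounded and upper semicontinuous, let v : ℝ^n × [0,T] → ℝ be bounded and lower semicontinuous with v(·,0) uniformly continuous on ℝ^n, and suppose there exists δ > 0 with sup_{(x,t) ∈ ℝ^n × [0,T)} (u(x,t) − v(x,t)) − δ > M_b, where M_b := sup_{x ∈ ℝ^n} max(u(x,0) − v(x,0), 0). Then there exist α₀, β₀, ρ₀ > 0 such that for every α > α₀, every β ∈ (0,β₀) and every ρ ∈ (0,ρ₀): sup_{(x,y,t) ∈ ℝ^n × ℝ^n × [0,T)} M_{α,ρ,β}(x,y,t) > M_b. -/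

import Mathlib

/-!
Pick `(x̄, t̄)` with `t̄ < T` at which `u - v` comes within `δ / 2` of its supremum. On the diagonal
`x = y = x̄` the penalty `α‖x - y‖²` vanishes, and for `ρ` and `β` small the remaining penalties
`ρ / (T - t̄) + β‖x̄‖²` stay below `δ / 2`, so `M_{α,ρ,β}(x̄, x̄, t̄) > M_b`. Boundedness of `u` and `v`
makes the supremum of `M_{α,ρ,β}` finite, hence at least this value.
-/

open scoped RealInnerProductSpace Matrix
open Set

noncomputable section

abbrev Evec (n : ℕ) := EuclideanSpace ℝ (Fin n)

/-- The quadratic form `v ↦ vᵀ X v` associated to an `n × n` real matrix. -/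
def quadForm {n : ℕ} (X : Matrix (Fin n) (Fin n) ℝ) (v : Evec n) : ℝ :=
  ∑ i, ∑ j, v i * X i j * v j

/-- Frobenius norm of a real matrix. -/
def frobNorm {n m : ℕ} (A : Matrix (Fin n) (Fin m) ℝ) : ℝ :=
  Real.sqrt (∑ i, ∑ j, (A i j) ^ 2)

/-- The operator `L(M, p, x) = (1/2) Tr(σ(x) σ(x)ᵀ M) + b(x) · p`. -/
def opL {n m : ℕ} (b : Evec n → Evec n) (σ : Evec n → Matrix (Fin n) (Fin m) ℝ)
    (X : Matrix (Fin n) (Fin n) ℝ) (p x : Evec n) : ℝ :=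
  (1 / 2) * Matrix.trace (σ x * (σ x)ᵀ * X) + ⟪b x, p⟫

/-- `(a, p, X)` belongs to the parabolic superjet `P^{2,+} w (x,t)` relative to the
domain `U × (0,T)`. -/
def InSuperJet {n : ℕ} (T : ℝ) (U : Set (Evec n)) (w : Evec n → ℝ → ℝ)
    (x : Evec n) (t a : ℝ) (p : Evec n) (X : Matrix (Fin n) (Fin n) ℝ) : Prop :=
  ∀ η > (0 : ℝ), ∃ δ > (0 : ℝ), ∀ y ∈ U, ∀ s ∈ Set.Ioo (0 : ℝ) T,
    ‖y - x‖ + |s - t| < δ →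
    w y s ≤ w x t + a * (s - t) + ⟪p, y - x⟫ + (1 / 2) * quadForm X (y - x)
      + η * (|s - t| + ‖y - x‖ ^ 2)

/-- `(a, p, X)` belongs to the parabolic subjet `P^{2,-} w (x,t) = -P^{2,+}(-w)(x,t)`. -/
def InSubJet {n : ℕ} (T : ℝ) (U : Set (Evec n)) (w : Evec n → ℝ → ℝ)
    (x : Evec n) (t a : ℝ) (p : Evec n) (X : Matrix (Fin n) (Fin n) ℝ) : Prop :=
  InSuperJet T U (fun y s => -(w y s)) x t (-a) (-p) (-X)

/-- Jet inequality of a viscosity subsolution of `∂_t u - L(D²u, Du, x) = 0` on `U × (0,T)`. -/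
def SubsolutionPropOn {n m : ℕ} (b : Evec n → Evec n) (σ : Evec n → Matrix (Fin n) (Fin m) ℝ)
    (T : ℝ) (U : Set (Evec n)) (u : Evec n → ℝ → ℝ) : Prop :=
  ∀ x ∈ U, ∀ t ∈ Set.Ioo (0 : ℝ) T, ∀ (a : ℝ) (p : Evec n) (X : Matrix (Fin n) (Fin n) ℝ),
    X.IsSymm → InSuperJet T U u x t a p X → a - opL b σ X p x ≤ 0

/-- Jet inequality of a viscosity supersolution of `∂_t u - L(D²u, Du, x) = 0` on `U × (0,T)`. -/
def SupersolutionPropOn {n m : ℕ} (b : Evec n → Evec n) (σ : Evec n → Matrix (Fin n) (Fin m) ℝ)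
    (T : ℝ) (U : Set (Evec n)) (u : Evec n → ℝ → ℝ) : Prop :=
  ∀ x ∈ U, ∀ t ∈ Set.Ioo (0 : ℝ) T, ∀ (a : ℝ) (p : Evec n) (X : Matrix (Fin n) (Fin n) ℝ),
    X.IsSymm → InSubJet T U u x t a p X → 0 ≤ a - opL b σ X p x

/-- The set `L_{b,σ}` of points around which `(b, σ)` is locally Lipschitz. -/
def Lset {n m : ℕ} (b : Evec n → Evec n) (σ : Evec n → Matrix (Fin n) (Fin m) ℝ) :
    Set (Evec n) :=
  {x | ∃ U ∈ nhds x, ∃ K ≥ (0 : ℝ), ∀ y ∈ U, ∀ z ∈ U,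
    ‖b y - b z‖ + frobNorm (σ y - σ z) ≤ K * ‖y - z‖}

/-- The complement `NL_{b,σ}` of `L_{b,σ}`. -/
def NLset {n m : ℕ} (b : Evec n → Evec n) (σ : Evec n → Matrix (Fin n) (Fin m) ℝ) :
    Set (Evec n) :=
  (Lset b σ)ᶜ

/-- Assumption Z on the coefficients `b`, `σ`. -/
structure AssumptionZ {n m : ℕ} (b : Evec n → Evec n) (σ : Evec n → Matrix (Fin n) (Fin m) ℝ)
    (Cb Cσ α β : ℝ) : Prop where
  hCb : 0 < Cb
  hCσ : 0 < Cσ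
  hα : α ∈ Set.Ioc (0 : ℝ) 1
  hβ : β ∈ Set.Ioc (0 : ℝ) 1
  hb_bdd : ∃ C, ∀ x, ‖b x‖ ≤ C
  hσ_bdd : ∃ C, ∀ x, frobNorm (σ x) ≤ C
  hb_hold : ∀ x y, ‖b x - b y‖ ≤ Cb * ‖x - y‖ ^ α
  hσ_hold : ∀ x y, frobNorm (σ x - σ y) ≤ Cσ * ‖x - y‖ ^ β
  hNL : ∀ x ∈ NLset b σ, b x = 0 ∧ σ x = 0 ∧ ∃ r > (0 : ℝ),
    ∀ y ∈ Metric.ball x r ∩ Lset b σ, ∀ v : Evec n,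
      Cσ⁻¹ * ‖x - y‖ ^ (2 * β) * ‖v‖ ^ 2 ≤ quadForm (σ y * (σ y)ᵀ) v ∧
      quadForm (σ y * (σ y)ᵀ) v ≤ Cσ * ‖x - y‖ ^ (2 * β) * ‖v‖ ^ 2
  hexp : 1 + α - 2 * β > 0
  hβ_half : β > 1 / 2

/-- Assumption P on the approximating coefficients `bε`, `σε`. -/
structure AssumptionP {n m : ℕ} (b : Evec n → Evec n) (σ : Evec n → Matrix (Fin n) (Fin m) ℝ)
    (bε : ℝ → Evec n → Evec n) (σε : ℝ → Evec n → Matrix (Fin n) (Fin m) ℝ) : Prop where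
  hb_cont : Continuous b
  hσ_cont : ∀ i j, Continuous fun x => σ x i j
  hb_bdd : ∃ C, ∀ x, ‖b x‖ ≤ C
  hσ_bdd : ∃ C, ∀ x, frobNorm (σ x) ≤ C
  hbε_cont : ∀ ε > (0 : ℝ), Continuous (bε ε)
  hσε_cont : ∀ ε > (0 : ℝ), ∀ i j, Continuous fun x => σε ε x i j
  hbε_bdd : ∀ ε > (0 : ℝ), ∃ C, ∀ x, ‖bε ε x‖ ≤ C
  hσε_bdd : ∀ ε > (0 : ℝ), ∃ C, ∀ x, frobNorm (σε ε x) ≤ C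
  hposdef : ∀ ε > (0 : ℝ), ∀ x, (σε ε x * (σε ε x)ᵀ).PosDef
  hconv_b : ∀ K : Set (Evec n), IsCompact K → ∀ η > (0 : ℝ), ∃ ε₀ > (0 : ℝ),
    ∀ ε, 0 < ε → ε < ε₀ → ∀ x ∈ K, ‖bε ε x - b x‖ < η
  hconv_σ : ∀ K : Set (Evec n), IsCompact K → ∀ η > (0 : ℝ), ∃ ε₀ > (0 : ℝ),
    ∀ ε, 0 < ε → ε < ε₀ → ∀ x ∈ K, frobNorm (σε ε x - σ x) < η

/-- The upper relaxed half-limit `u*` of a family `(u^ε)_{ε>0}` on `ℝ^n × [0,T)`. -/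
def relaxSup {n : ℕ} (T : ℝ) (u : ℝ → Evec n → ℝ → ℝ) (x : Evec n) (t : ℝ) : ℝ :=
  ⨅ δ : {d : ℝ // 0 < d}, sSup {r : ℝ | ∃ ε, 0 < ε ∧ ε < δ.1 ∧ ∃ y : Evec n, ∃ s : ℝ,
    0 ≤ s ∧ s < T ∧ ‖x - y‖ + |t - s| < δ.1 ∧ u ε y s = r}

/-- The lower relaxed half-limit `u_*` of a family `(u^ε)_{ε>0}` on `ℝ^n × [0,T)`. -/
def relaxInf {n : ℕ} (T : ℝ) (u : ℝ → Evec n → ℝ → ℝ) (x : Evec n) (t : ℝ) : ℝ :=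
  ⨆ δ : {d : ℝ // 0 < d}, sInf {r : ℝ | ∃ ε, 0 < ε ∧ ε < δ.1 ∧ ∃ y : Evec n, ∃ s : ℝ,
    0 ≤ s ∧ s < T ∧ ‖x - y‖ + |t - s| < δ.1 ∧ u ε y s = r}


/-- The auxiliary function `M_{α,ρ,β}(x,y,t) = u(x,t) - ρ/(T-t) - v(y,t) - α‖x-y‖² - β‖x‖²`. -/
def Maux {n : ℕ} (T α ρ β : ℝ) (u v : Evec n → ℝ → ℝ) (x y : Evec n) (t : ℝ) : ℝ :=
  u x t - ρ / (T - t) - v y t - α * ‖x - y‖ ^ 2 - β * ‖x‖ ^ 2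

/-- `M_b = sup_x max(u(x,0) - v(x,0), 0)`. -/
def MbVal {n : ℕ} (u v : Evec n → ℝ → ℝ) : ℝ :=
  ⨆ x : Evec n, max (u x 0 - v x 0) 0

theorem exists_forall_div_add_mul_lt {ε s c : ℝ} (hε : 0 < ε) (hs : 0 < s) (hc : 0 ≤ c) :
    ∃ β₀ > (0 : ℝ), ∃ ρ₀ > (0 : ℝ), ∀ β < β₀, ∀ ρ < ρ₀, ρ / s + β * c < ε := by
  refine ⟨ε / (2 * (c + 1)), by positivity, ε * s / 2, by positivity, fun β hβ ρ hρ => ?_⟩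
  have hρs : ρ / s < ε / 2 := by
    rw [div_lt_iff₀ hs]; linarith
  have hβc : β * c < ε / 2 := by
    rw [lt_div_iff₀ (by positivity)] at hβ
    rcases le_or_gt β 0 with hβ0 | hβ0 <;> nlinarith
  linarith

section AuxiliaryFunction

variable {n : ℕ} {T α ρ β : ℝ} {u v : Evec n → ℝ → ℝ}

theorem Maux_self (x : Evec n) (t : ℝ) :
    Maux T α ρ β u v x x t = u x t - v x t - ρ / (T - t) - β * ‖x‖ ^ 2 := by
  simp only [Maux, sub_self, norm_zero]
  ring

theorem bddAbove_Maux (hα : 0 ≤ α) (hρ : 0 ≤ ρ) (hβ : 0 ≤ β) {Cu Cv : ℝ}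
    (hu : ∀ x t, 0 ≤ t → t < T → u x t ≤ Cu) (hv : ∀ x t, 0 ≤ t → t < T → -Cv ≤ v x t) :
    BddAbove {r : ℝ | ∃ (x y : Evec n) (t : ℝ), 0 ≤ t ∧ t < T ∧
      r = Maux T α ρ β u v x y t} := by
  refine ⟨Cu + Cv, ?_⟩
  rintro _ ⟨x, y, t, ht0, htT, rfl⟩
  have hpen : 0 ≤ ρ / (T - t) := div_nonneg hρ (sub_nonneg.2 htT.le)
  have hux := hu x t ht0 htT
  have hvy := hv y t ht0 htT
  have hαxy : 0 ≤ α * ‖x - y‖ ^ 2 := by positivity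
  have hβx : 0 ≤ β * ‖x‖ ^ 2 := by positivity
  unfold Maux
  linarith

end AuxiliaryFunction

theorem aux_function_sup_exceeds_boundary_general {n : ℕ} (T : ℝ) (hT : 0 < T)
    (u v : Evec n → ℝ → ℝ)
    (hu_bdd : ∃ C, ∀ x t, 0 ≤ t → t ≤ T → |u x t| ≤ C)
    (hv_bdd : ∃ C, ∀ x t, 0 ≤ t → t ≤ T → |v x t| ≤ C)
    (hδ : ∃ δ > (0 : ℝ),
      sSup {r : ℝ | ∃ (x : Evec n) (t : ℝ), 0 ≤ t ∧ t < T ∧ r = u x t - v x t} - δ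
        > MbVal u v) :
    ∃ α₀ > (0 : ℝ), ∃ β₀ > (0 : ℝ), ∃ ρ₀ > (0 : ℝ), ∀ α > α₀,
      ∀ β : ℝ, 0 < β → β < β₀ → ∀ ρ : ℝ, 0 < ρ → ρ < ρ₀ →
        sSup {r : ℝ | ∃ (x y : Evec n) (t : ℝ), 0 ≤ t ∧ t < T ∧
          r = Maux T α ρ β u v x y t} > MbVal u v := by
  obtain ⟨Cu, hCu⟩ := hu_bdd
  obtain ⟨Cv, hCv⟩ := hv_bdd
  obtain ⟨δ, hδ0, hδ⟩ := hδ
  set S := {r : ℝ | ∃ (x : Evec n) (t : ℝ), 0 ≤ t ∧ t < T ∧ r = u x t - v x t}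
  obtain ⟨_, ⟨x, t, ht0, htT, rfl⟩, hnear⟩ := exists_lt_of_lt_csSup (s := S)
    ⟨u 0 0 - v 0 0, 0, 0, le_rfl, hT, rfl⟩ (sub_lt_self _ (half_pos hδ0))
  obtain ⟨β₀, hβ₀, ρ₀, hρ₀, hpen⟩ :=
    exists_forall_div_add_mul_lt (half_pos hδ0) (sub_pos.2 htT) (sq_nonneg ‖x‖)
  refine ⟨1, one_pos, β₀, hβ₀, ρ₀, hρ₀, fun α hα β hβ0 hβ ρ hρ0 hρ => ?_⟩
  have hbdd := bddAbove_Maux (zero_le_one.trans hα.le) hρ0.le hβ0.le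
    (fun x t ht0 htT => (abs_le.1 (hCu x t ht0 htT.le)).2)
    (fun x t ht0 htT => (abs_le.1 (hCv x t ht0 htT.le)).1)
  calc MbVal u v < Maux T α ρ β u v x x t := by
        rw [Maux_self]; linarith [hpen β hβ ρ hρ]
    _ ≤ _ := le_csSup hbdd ⟨x, x, t, ht0, htT, rfl⟩

/-- when `v(·,0)` is uniformly continuous, the supremum of the auxiliary
function exceeds `M_b` for large `α` and small `β`, `ρ`. -/
theorem aux_function_sup_exceeds_boundary {n : ℕ} (T : ℝ) (hT : 0 < T)
    (u v : Evec n → ℝ → ℝ)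
    (hu_bdd : ∃ C, ∀ x t, 0 ≤ t → t ≤ T → |u x t| ≤ C)
    (hv_bdd : ∃ C, ∀ x t, 0 ≤ t → t ≤ T → |v x t| ≤ C)
    (hu_usc : UpperSemicontinuousOn (Function.uncurry u) (Set.univ ×ˢ Set.Icc 0 T))
    (hv_lsc : LowerSemicontinuousOn (Function.uncurry v) (Set.univ ×ˢ Set.Icc 0 T))
    (hv0_uc : UniformContinuous (fun x => v x 0))
    (hδ : ∃ δ > (0 : ℝ),
      sSup {r : ℝ | ∃ (x : Evec n) (t : ℝ), 0 ≤ t ∧ t < T ∧ r = u x t - v x t} - δ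
        > MbVal u v) :
    ∃ α₀ > (0 : ℝ), ∃ β₀ > (0 : ℝ), ∃ ρ₀ > (0 : ℝ), ∀ α > α₀,
      ∀ β : ℝ, 0 < β → β < β₀ → ∀ ρ : ℝ, 0 < ρ → ρ < ρ₀ →
        sSup {r : ℝ | ∃ (x y : Evec n) (t : ℝ), 0 ≤ t ∧ t < T ∧
          r = Maux T α ρ β u v x y t} > MbVal u v :=
  aux_function_sup_exceeds_boundary_general T hT u v hu_bdd hv_bdd hδ

end
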